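/- arXiv:2408.16795 — 3 statements merged into one kernel-verified Lean document; each statement's English description precedes it below -/
import Mathlib

section
/- Let A be the free ℤ-module with basis {x₁c : c ∈ C} ∪ {x₂c : c ∈ C}, where C = {1, c₁, c₂, c₁c₂} is the Klein four-group, and define δ₁ : A → ℤ[C] on basis elements by δ₁(x₁c) = (c₁ − 1)c and δ₁(x₂c) = (c₂ − 1)c, extended ℤ-linearly. Then the kernel of δ₁ is the ℤ-submodule generated by x₁(1+c₁), x₁c₂(1+c₁), x₂(1+c₂), x₂c₁(1+c₂), and x₁(1−c₂) − x₂(1−c₁). -/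
/-- The Klein four-group `C = ℤ/2 × ℤ/2`, written multiplicatively. -/
abbrev KleinC : Type := Multiplicative (ZMod 2 × ZMod 2)

/-- The group ring `ℤ[C]` of the Klein four-group. -/
abbrev GR : Type := MonoidAlgebra ℤ KleinC

/-- The generator `c₁` of the Klein four-group, as an element of `ℤ[C]`. -/
noncomputable def c1 : GR := MonoidAlgebra.of ℤ KleinC (Multiplicative.ofAdd (1, 0))

/-- The generator `c₂` of the Klein four-group, as an element of `ℤ[C]`. -/
noncomputable def c2 : GR := MonoidAlgebra.of ℤ KleinC (Multiplicative.ofAdd (0, 1))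

private def g10 : KleinC := Multiplicative.ofAdd (1, 0)
private def g01 : KleinC := Multiplicative.ofAdd (0, 1)
private def g11 : KleinC := Multiplicative.ofAdd (1, 1)

private lemma klein_cases : ∀ g : KleinC, g = 1 ∨ g = g10 ∨ g = g01 ∨ g = g11 := by decide

private lemma GR_ext {u v : GR} (h1 : u.coeff 1 = v.coeff 1) (h2 : u.coeff g10 = v.coeff g10)
    (h3 : u.coeff g01 = v.coeff g01) (h4 : u.coeff g11 = v.coeff g11) : u = v := by
  ext g; rcases klein_cases g with h|h|h|h <;> subst h <;> assumption

private lemma hc1 : c1 = MonoidAlgebra.single g10 1 := rfl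
private lemma hc2 : c2 = MonoidAlgebra.single g01 1 := rfl
private lemma hone : (1 : GR) = MonoidAlgebra.single 1 1 := rfl

private lemma c1sq : c1 * c1 = 1 := by
  rw [hc1, MonoidAlgebra.single_mul_single, mul_one]
  have : g10 * g10 = 1 := by decide
  rw [this]; rfl

private lemma c2sq : c2 * c2 = 1 := by
  rw [hc2, MonoidAlgebra.single_mul_single, mul_one]
  have : g01 * g01 = 1 := by decide
  rw [this]; rfl

private lemma mul1 : c2 * (1 + c1) = MonoidAlgebra.single g01 1 + MonoidAlgebra.single g11 1 := by
  rw [hc1, hc2, mul_add, mul_one, MonoidAlgebra.single_mul_single, mul_one]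
  have : g01 * g10 = g11 := by decide
  rw [this]

private lemma mul2 : c1 * (1 + c2) = MonoidAlgebra.single g10 1 + MonoidAlgebra.single g11 1 := by
  rw [hc1, hc2, mul_add, mul_one, MonoidAlgebra.single_mul_single, mul_one]
  have : g10 * g01 = g11 := by decide
  rw [this]

private lemma c1_mul_apply (p : GR) (g : KleinC) : (c1 * p).coeff g = p.coeff (g10 * g) := by
  rw [hc1, MonoidAlgebra.single_mul_apply, one_mul]
  have : g10⁻¹ = g10 := by decide
  rw [this]

private lemma c2_mul_apply (p : GR) (g : KleinC) : (c2 * p).coeff g = p.coeff (g01 * g) := by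
  rw [hc2, MonoidAlgebra.single_mul_apply, one_mul]
  have : g01⁻¹ = g01 := by decide
  rw [this]

private lemma ev11 (b:ℤ) : (MonoidAlgebra.single (1:KleinC) b).coeff (1:KleinC) = b := Finsupp.single_eq_same
private lemma ev1a (b:ℤ) : (MonoidAlgebra.single (1:KleinC) b).coeff g10 = 0 := Finsupp.single_eq_of_ne' (by decide)
private lemma ev1b (b:ℤ) : (MonoidAlgebra.single (1:KleinC) b).coeff g01 = 0 := Finsupp.single_eq_of_ne' (by decide)
private lemma ev1c (b:ℤ) : (MonoidAlgebra.single (1:KleinC) b).coeff g11 = 0 := Finsupp.single_eq_of_ne' (by decide)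
private lemma eva1 (b:ℤ) : (MonoidAlgebra.single g10 b).coeff (1:KleinC) = 0 := Finsupp.single_eq_of_ne' (by decide)
private lemma evaa (b:ℤ) : (MonoidAlgebra.single g10 b).coeff g10 = b := Finsupp.single_eq_same
private lemma evab (b:ℤ) : (MonoidAlgebra.single g10 b).coeff g01 = 0 := Finsupp.single_eq_of_ne' (by decide)
private lemma evac (b:ℤ) : (MonoidAlgebra.single g10 b).coeff g11 = 0 := Finsupp.single_eq_of_ne' (by decide)
private lemma evb1 (b:ℤ) : (MonoidAlgebra.single g01 b).coeff (1:KleinC) = 0 := Finsupp.single_eq_of_ne' (by decide)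
private lemma evba (b:ℤ) : (MonoidAlgebra.single g01 b).coeff g10 = 0 := Finsupp.single_eq_of_ne' (by decide)
private lemma evbb (b:ℤ) : (MonoidAlgebra.single g01 b).coeff g01 = b := Finsupp.single_eq_same
private lemma evbc (b:ℤ) : (MonoidAlgebra.single g01 b).coeff g11 = 0 := Finsupp.single_eq_of_ne' (by decide)
private lemma evc1 (b:ℤ) : (MonoidAlgebra.single g11 b).coeff (1:KleinC) = 0 := Finsupp.single_eq_of_ne' (by decide)
private lemma evca (b:ℤ) : (MonoidAlgebra.single g11 b).coeff g10 = 0 := Finsupp.single_eq_of_ne' (by decide)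
private lemma evcb (b:ℤ) : (MonoidAlgebra.single g11 b).coeff g01 = 0 := Finsupp.single_eq_of_ne' (by decide)
private lemma evcc (b:ℤ) : (MonoidAlgebra.single g11 b).coeff g11 = b := Finsupp.single_eq_same

private lemma A_one : (1 + c1 : GR).coeff (1:KleinC) = 1 := by
  rw [hone, hc1, MonoidAlgebra.coeff_add, Finsupp.add_apply, ev11, eva1]; norm_num
private lemma A_a : (1 + c1 : GR).coeff g10 = 1 := by
  rw [hone, hc1, MonoidAlgebra.coeff_add, Finsupp.add_apply, ev1a, evaa]; norm_num
private lemma A_b : (1 + c1 : GR).coeff g01 = 0 := by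
  rw [hone, hc1, MonoidAlgebra.coeff_add, Finsupp.add_apply, ev1b, evab]; norm_num
private lemma A_c : (1 + c1 : GR).coeff g11 = 0 := by
  rw [hone, hc1, MonoidAlgebra.coeff_add, Finsupp.add_apply, ev1c, evac]; norm_num
private lemma B_one : (c2 * (1 + c1) : GR).coeff (1:KleinC) = 0 := by
  rw [mul1, MonoidAlgebra.coeff_add, Finsupp.add_apply, evb1, evc1]; norm_num
private lemma B_a : (c2 * (1 + c1) : GR).coeff g10 = 0 := by
  rw [mul1, MonoidAlgebra.coeff_add, Finsupp.add_apply, evba, evca]; norm_num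
private lemma B_b : (c2 * (1 + c1) : GR).coeff g01 = 1 := by
  rw [mul1, MonoidAlgebra.coeff_add, Finsupp.add_apply, evbb, evcb]; norm_num
private lemma B_c : (c2 * (1 + c1) : GR).coeff g11 = 1 := by
  rw [mul1, MonoidAlgebra.coeff_add, Finsupp.add_apply, evbc, evcc]; norm_num
private lemma C_one : (1 + c2 : GR).coeff (1:KleinC) = 1 := by
  rw [hone, hc2, MonoidAlgebra.coeff_add, Finsupp.add_apply, ev11, evb1]; norm_num
private lemma C_a : (1 + c2 : GR).coeff g10 = 0 := by
  rw [hone, hc2, MonoidAlgebra.coeff_add, Finsupp.add_apply, ev1a, evba]; norm_num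
private lemma C_b : (1 + c2 : GR).coeff g01 = 1 := by
  rw [hone, hc2, MonoidAlgebra.coeff_add, Finsupp.add_apply, ev1b, evbb]; norm_num
private lemma C_c : (1 + c2 : GR).coeff g11 = 0 := by
  rw [hone, hc2, MonoidAlgebra.coeff_add, Finsupp.add_apply, ev1c, evbc]; norm_num
private lemma D_one : (c1 * (1 + c2) : GR).coeff (1:KleinC) = 0 := by
  rw [mul2, MonoidAlgebra.coeff_add, Finsupp.add_apply, eva1, evc1]; norm_num
private lemma D_a : (c1 * (1 + c2) : GR).coeff g10 = 1 := by
  rw [mul2, MonoidAlgebra.coeff_add, Finsupp.add_apply, evaa, evca]; norm_num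
private lemma D_b : (c1 * (1 + c2) : GR).coeff g01 = 0 := by
  rw [mul2, MonoidAlgebra.coeff_add, Finsupp.add_apply, evab, evcb]; norm_num
private lemma D_c : (c1 * (1 + c2) : GR).coeff g11 = 1 := by
  rw [mul2, MonoidAlgebra.coeff_add, Finsupp.add_apply, evac, evcc]; norm_num
private lemma E_one : (1 - c2 : GR).coeff (1:KleinC) = 1 := by
  rw [hone, hc2, MonoidAlgebra.coeff_sub, Finsupp.sub_apply, ev11, evb1]; norm_num
private lemma E_a : (1 - c2 : GR).coeff g10 = 0 := by
  rw [hone, hc2, MonoidAlgebra.coeff_sub, Finsupp.sub_apply, ev1a, evba]; norm_num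
private lemma E_b : (1 - c2 : GR).coeff g01 = -1 := by
  rw [hone, hc2, MonoidAlgebra.coeff_sub, Finsupp.sub_apply, ev1b, evbb]; norm_num
private lemma E_c : (1 - c2 : GR).coeff g11 = 0 := by
  rw [hone, hc2, MonoidAlgebra.coeff_sub, Finsupp.sub_apply, ev1c, evbc]; norm_num
private lemma F_one : (-(1 - c1) : GR).coeff (1:KleinC) = -1 := by
  rw [MonoidAlgebra.coeff_neg, Finsupp.neg_apply, hone, hc1, MonoidAlgebra.coeff_sub, Finsupp.sub_apply, ev11, eva1]; norm_num
private lemma F_a : (-(1 - c1) : GR).coeff g10 = 1 := by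
  rw [MonoidAlgebra.coeff_neg, Finsupp.neg_apply, hone, hc1, MonoidAlgebra.coeff_sub, Finsupp.sub_apply, ev1a, evaa]; norm_num
private lemma F_b : (-(1 - c1) : GR).coeff g01 = 0 := by
  rw [MonoidAlgebra.coeff_neg, Finsupp.neg_apply, hone, hc1, MonoidAlgebra.coeff_sub, Finsupp.sub_apply, ev1b, evab]; norm_num
private lemma F_c : (-(1 - c1) : GR).coeff g11 = 0 := by
  rw [MonoidAlgebra.coeff_neg, Finsupp.neg_apply, hone, hc1, MonoidAlgebra.coeff_sub, Finsupp.sub_apply, ev1c, evac]; norm_num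

private lemma eval_comb (x y z : ℤ) (u v w : GR) (g : KleinC) :
    (x • u + y • v + z • w).coeff g = x * u.coeff g + y * v.coeff g + z * w.coeff g := by
  rw [MonoidAlgebra.coeff_add, MonoidAlgebra.coeff_add, Finsupp.add_apply, Finsupp.add_apply, MonoidAlgebra.coeff_smul_apply, MonoidAlgebra.coeff_smul_apply,
    MonoidAlgebra.coeff_smul_apply, smul_eq_mul, smul_eq_mul, smul_eq_mul]

/-- Let `A = ℤ[C] ⊕ ℤ[C]` be the free ℤ-module with basis `{x₁c} ∪ {x₂c}` (`c ∈ C`),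
where `x₁p` corresponds to `(p, 0)` and `x₂q` to `(0, q)`, and let
`δ₁(x₁c) = (c₁ − 1)c`, `δ₁(x₂c) = (c₂ − 1)c`, extended ℤ-linearly. Then
`ker δ₁` is the ℤ-submodule generated by `x₁(1+c₁)`, `x₁c₂(1+c₁)`, `x₂(1+c₂)`,
`x₂c₁(1+c₂)` and `x₁(1−c₂) − x₂(1−c₁)`. -/
theorem stmt_12 (δ : GR × GR →ₗ[ℤ] GR)
    (hδ : ∀ p q : GR, δ (p, q) = (c1 - 1) * p + (c2 - 1) * q) :
    LinearMap.ker δ = Submodule.span ℤ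
      ({(1 + c1, 0), (c2 * (1 + c1), 0), (0, 1 + c2), (0, c1 * (1 + c2)),
        (1 - c2, -(1 - c1))} : Set (GR × GR)) := by
  apply le_antisymm
  · rintro ⟨p, q⟩ hpq
    rw [LinearMap.mem_ker, hδ] at hpq
    have key : ∀ g : KleinC, p.coeff (g10 * g) - p.coeff g + (q.coeff (g01 * g) - q.coeff g) = 0 := by
      intro g
      have : ((c1 - 1) * p + (c2 - 1) * q).coeff g = (0 : GR).coeff g := by rw [hpq]
      rwa [MonoidAlgebra.coeff_add, Finsupp.add_apply, sub_mul, sub_mul, one_mul, one_mul, MonoidAlgebra.coeff_sub, MonoidAlgebra.coeff_sub, Finsupp.sub_apply,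
        Finsupp.sub_apply, c1_mul_apply, c2_mul_apply, MonoidAlgebra.coeff_zero, Finsupp.zero_apply] at this
    have e1 := key 1
    have e2 := key g10
    have e3 := key g01
    have e4 := key g11
    have m1 : g10 * (1:KleinC) = g10 := by decide
    have m2 : g01 * (1:KleinC) = g01 := by decide
    have m3 : g10 * g10 = 1 := by decide
    have m4 : g01 * g10 = g11 := by decide
    have m5 : g10 * g01 = g11 := by decide
    have m6 : g01 * g01 = 1 := by decide
    have m7 : g10 * g11 = g01 := by decide
    have m8 : g01 * g11 = g10 := by decide
    rw [m1, m2] at e1; rw [m3, m4] at e2; rw [m5, m6] at e3; rw [m7, m8] at e4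
    have hp : p = (p.coeff g10) • (1 + c1 : GR) + (p.coeff g01 + p.coeff 1 - p.coeff g10) • (c2 * (1 + c1))
        + (p.coeff 1 - p.coeff g10) • (1 - c2) := by
      refine GR_ext ?_ ?_ ?_ ?_
      · rw [eval_comb, A_one, B_one, E_one]; linarith
      · rw [eval_comb, A_a, B_a, E_a]; linarith
      · rw [eval_comb, A_b, B_b, E_b]; linarith
      · rw [eval_comb, A_c, B_c, E_c]; linarith
    have hq : q = (q.coeff g01) • (1 + c2 : GR) + (q.coeff g11) • (c1 * (1 + c2))
        + (p.coeff 1 - p.coeff g10) • (-(1 - c1)) := by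
      refine GR_ext ?_ ?_ ?_ ?_
      · rw [eval_comb, C_one, D_one, F_one]; linarith
      · rw [eval_comb, C_a, D_a, F_a]; linarith
      · rw [eval_comb, C_b, D_b, F_b]; linarith
      · rw [eval_comb, C_c, D_c, F_c]; linarith
    have hdec : (p, q) = (p.coeff g10) • ((1 + c1, 0) : GR × GR)
        + (p.coeff g01 + p.coeff 1 - p.coeff g10) • ((c2 * (1 + c1), 0) : GR × GR)
        + (q.coeff g01) • ((0, 1 + c2) : GR × GR)
        + (q.coeff g11) • ((0, c1 * (1 + c2)) : GR × GR)
        + (p.coeff 1 - p.coeff g10) • ((1 - c2, -(1 - c1)) : GR × GR) := by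
      refine Prod.ext ?_ ?_ <;>
        simp only [Prod.fst_add, Prod.snd_add, Prod.smul_mk, Prod.fst, Prod.snd,
          smul_zero, add_zero, zero_add]
      · rw [← hp]
      · rw [← hq]
    rw [hdec]
    have hsub := Submodule.subset_span (R := ℤ)
      (s := ({(1 + c1, 0), (c2 * (1 + c1), 0), (0, 1 + c2),
        (0, c1 * (1 + c2)), (1 - c2, -(1 - c1))} : Set (GR × GR)))
    refine Submodule.add_mem _ (Submodule.add_mem _ (Submodule.add_mem _ (Submodule.add_mem _
      (Submodule.smul_mem _ _ (hsub ?_)) (Submodule.smul_mem _ _ (hsub ?_)))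
      (Submodule.smul_mem _ _ (hsub ?_))) (Submodule.smul_mem _ _ (hsub ?_)))
      (Submodule.smul_mem _ _ (hsub ?_))
    · left; rfl
    · right; left; rfl
    · right; right; left; rfl
    · right; right; right; left; rfl
    · right; right; right; right; rfl
  · rw [Submodule.span_le]
    rintro x hx
    simp only [Set.mem_insert_iff, Set.mem_singleton_iff] at hx
    have h1 : c1 * c1 = 1 := c1sq
    have h2 : c2 * c2 = 1 := c2sq
    rcases hx with rfl|rfl|rfl|rfl|rfl <;>
      · rw [SetLike.mem_coe, LinearMap.mem_ker, hδ]
        first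
          | linear_combination h1
          | linear_combination c2 * h1
          | linear_combination h2
          | linear_combination c1 * h2
          | linear_combination (0 : GR) * h1
end

section
/- Consider the chain complex of free ℤ[C]-modules (C = Klein four-group with generators c₁, c₂): 0 → ℤ[C] →^{δ₃} ℤ[C]² →^{δ₂} ℤ[C]² →^{δ₁} ℤ[C] → 0, where δ₁(e₁) = c₁ − 1, δ₁(e₂) = c₂ − 1; δ₂(f₁) = e₁(1 − c₂) − e₂(1 + c₁c₂), δ₂(f₂) = e₂(1 − c₁) − e₁(1 + c₁c₂); δ₃(g) = f₁(c₁ − 1) + f₂(c₂ − 1). Then δ₁ ∘ δ₂ = 0 and δ₂ ∘ δ₃ = 0. -/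
/-- For the chain complex of free `ℤ[C]`-modules
`0 → ℤ[C] →^{δ₃} ℤ[C]² →^{δ₂} ℤ[C]² →^{δ₁} ℤ[C] → 0` with
`δ₁(e₁) = c₁ − 1`, `δ₁(e₂) = c₂ − 1`,
`δ₂(f₁) = e₁(1 − c₂) − e₂(1 + c₁c₂)`, `δ₂(f₂) = e₂(1 − c₁) − e₁(1 + c₁c₂)`,
`δ₃(g) = f₁(c₁ − 1) + f₂(c₂ − 1)`, one has `δ₁ ∘ δ₂ = 0` and `δ₂ ∘ δ₃ = 0`. -/
theorem stmt_13 (δ1 : GR × GR →ₗ[GR] GR) (δ2 : GR × GR →ₗ[GR] GR × GR)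
    (δ3 : GR →ₗ[GR] GR × GR)
    (hδ1 : ∀ p q : GR, δ1 (p, q) = p * (c1 - 1) + q * (c2 - 1))
    (hδ2 : ∀ p q : GR,
      δ2 (p, q) = (p * (1 - c2) - q * (1 + c1 * c2), q * (1 - c1) - p * (1 + c1 * c2)))
    (hδ3 : ∀ g : GR, δ3 g = (g * (c1 - 1), g * (c2 - 1))) :
    δ1.comp δ2 = 0 ∧ δ2.comp δ3 = 0 := by
  have hc1 : c1 * c1 = 1 := by
    simp only [c1, ← map_mul, ← ofAdd_add]
    norm_num
    rfl
  have hc2 : c2 * c2 = 1 := by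
    simp only [c2, ← map_mul, ← ofAdd_add]
    norm_num
    rfl
  constructor
  · ext x <;> cases x with
    | mk p q =>
      simp only [LinearMap.comp_apply, hδ2, hδ1, LinearMap.zero_apply]
      ring_nf
      simp only [show c1 ^ 2 = 1 from by rw [sq, hc1], show c2 ^ 2 = 1 from by rw [sq, hc2], mul_one]
      ring
  · refine LinearMap.ext fun g => ?_
    rw [LinearMap.comp_apply, hδ3, hδ2, LinearMap.zero_apply]
    refine Prod.ext ?_ ?_ <;> simp only [Prod.fst_zero, Prod.snd_zero] <;>
    · ring_nf
      simp only [show c1 ^ 2 = 1 from by rw [sq, hc1], show c2 ^ 2 = 1 from by rw [sq, hc2], mul_one]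
      ring
end

section
/- In the chain complex over ℤ[C] (C Klein four-group) with δ₃ : ℤ[C] → ℤ[C]², δ₃(g) = f₁(c₁ − 1) + f₂(c₂ − 1), the kernel of δ₃ as a ℤ-module is the free ℤ-module of rank 1 generated by g·(1 + c₁)(1 + c₂) = g·(1 + c₁ + c₂ + c₁c₂). -/
abbrev x1 : KleinC := Multiplicative.ofAdd (1, 0)
abbrev x2 : KleinC := Multiplicative.ofAdd (0, 1)

lemma c1_def : c1 = MonoidAlgebra.single x1 1 := rfl
lemma c2_def : c2 = MonoidAlgebra.single x2 1 := rfl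

lemma N_eq : (1 + c1) * (1 + c2) =
    MonoidAlgebra.single (1 : KleinC) 1 + MonoidAlgebra.single x1 1
      + MonoidAlgebra.single x2 1 + MonoidAlgebra.single (x1 * x2) 1 := by
  rw [c1_def, c2_def, MonoidAlgebra.one_def]
  rw [add_mul, mul_add, mul_add]
  rw [MonoidAlgebra.single_mul_single, MonoidAlgebra.single_mul_single,
    MonoidAlgebra.single_mul_single, MonoidAlgebra.single_mul_single]
  simp only [one_mul, mul_one]
  abel

lemma elems (y : KleinC) : y = 1 ∨ y = x1 ∨ y = x2 ∨ y = x1 * x2 := by revert y; decide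

lemma four_apply (y : KleinC) :
    (Finsupp.single (1:KleinC) (1:ℤ) + Finsupp.single x1 (1:ℤ) + Finsupp.single x2 (1:ℤ)
      + Finsupp.single (x1*x2) (1:ℤ) : KleinC →₀ ℤ) y = 1 := by
  rcases elems y with h | h | h | h <;> subst h <;>
    simp only [Finsupp.add_apply, Finsupp.single_apply] <;> decide

lemma N_apply (y : KleinC) : ((1 + c1) * (1 + c2) : GR).coeff y = 1 := by
  rw [N_eq]
  exact four_apply y

lemma inv_eq (y : KleinC) : y⁻¹ = y := by revert y; decide

/-- For `δ₃ : ℤ[C] → ℤ[C]²`, `δ₃(g) = (g(c₁ − 1), g(c₂ − 1))`, the kernel of `δ₃` as a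
ℤ-module is the free ℤ-module of rank 1 generated by
`(1 + c₁)(1 + c₂) = 1 + c₁ + c₂ + c₁c₂`. -/
theorem stmt_15 (δ3 : GR →ₗ[ℤ] GR × GR)
    (hδ3 : ∀ g : GR, δ3 g = (g * (c1 - 1), g * (c2 - 1))) :
    LinearMap.ker δ3 = Submodule.span ℤ ({(1 + c1) * (1 + c2)} : Set GR) ∧
      (1 + c1) * (1 + c2) ≠ 0 := by
  constructor
  · ext g
    rw [LinearMap.mem_ker, hδ3, Submodule.mem_span_singleton, Prod.mk_eq_zero]
    constructor
    · rintro ⟨h1, h2⟩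
      rw [mul_sub, mul_one, sub_eq_zero] at h1 h2
      have k1 : ∀ y : KleinC, g.coeff (y * x1) = g.coeff y := by
        intro y
        conv_rhs => rw [← h1]
        rw [c1_def, MonoidAlgebra.mul_single_apply, inv_eq, mul_one]
      have k2 : ∀ y : KleinC, g.coeff (y * x2) = g.coeff y := by
        intro y
        conv_rhs => rw [← h2]
        rw [c2_def, MonoidAlgebra.mul_single_apply, inv_eq, mul_one]
      refine ⟨g.coeff 1, ?_⟩
      ext y
      rw [MonoidAlgebra.coeff_smul, Finsupp.smul_apply, N_apply, smul_eq_mul, mul_one]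
      rcases elems y with h | h | h | h <;> subst h
      · rfl
      · rw [← one_mul x1, k1]
      · rw [← one_mul x2, k2]
      · rw [k2, show x1 = 1 * x1 by rw [one_mul], k1]
    · rintro ⟨a, rfl⟩
      have hc1 : ((1 + c1) * (1 + c2) : GR) * c1 = (1 + c1) * (1 + c2) := by
        rw [N_eq, c1_def, add_mul, add_mul, add_mul]
        rw [MonoidAlgebra.single_mul_single, MonoidAlgebra.single_mul_single,
          MonoidAlgebra.single_mul_single, MonoidAlgebra.single_mul_single]
        have e1 : (1 : KleinC) * x1 = x1 := by decide
        have e2 : x1 * x1 = 1 := by decide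
        have e3 : x2 * x1 = x1 * x2 := by decide
        have e4 : x1 * x2 * x1 = x2 := by decide
        rw [e1, e2, e3, e4]
        simp only [mul_one]
        abel
      have hc2 : ((1 + c1) * (1 + c2) : GR) * c2 = (1 + c1) * (1 + c2) := by
        rw [N_eq, c2_def, add_mul, add_mul, add_mul]
        rw [MonoidAlgebra.single_mul_single, MonoidAlgebra.single_mul_single,
          MonoidAlgebra.single_mul_single, MonoidAlgebra.single_mul_single]
        have e1 : (1 : KleinC) * x2 = x2 := by decide
        have e2 : x1 * x2 * x2 = x1 := by decide
        have e3 : x2 * x2 = 1 := by decide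
        rw [e1, e2, e3]
        simp only [mul_one]
        abel
      constructor
      · rw [smul_mul_assoc, mul_sub, mul_one, hc1, sub_self, smul_zero]
      · rw [smul_mul_assoc, mul_sub, mul_one, hc2, sub_self, smul_zero]
  · intro h
    have := N_apply 1
    rw [h] at this
    simp at this
end
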